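/- arXiv:0801.1997 — 2 statements merged into one kernel-verified Lean document; each statement's English description precedes it below -/
import Mathlib

section
/- Let L be a Lie algebra over a field of characteristic zero, and let b₁, ..., bₘ ∈ L. Then for any k ∈ {1, ..., m}, the left-normed bracket [[b₁,b₂],...,bₘ] is a linear combination of left-normed brackets of the form [[b_k, b_{l₁}], ..., b_{l_{m-1}}], where (l₁, ..., l_{m-1}) ranges over permutations of {1,...,m} \ {k}. -/
/-- The left-normed bracket `[[x, l₁], l₂], …]`. -/
def leftNormedBracket {L : Type*} [LieRing L] (x : L) (l : List L) : L :=
  l.foldl (fun a c => ⁅a, c⁆) x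

/-!
Write `c = b_k`. To move `c` to the front of `[[x, l₁], …]` we induct on the number of entries
preceding it. If `c` follows `x` directly, antisymmetry gives `[[x, c], …] = -[[c, x], …]`.
Otherwise `[[x, y], …]` has `c` one step closer to the front, so it is a combination of brackets
`[[c, …], …]` in which `⁅x, y⁆` occurs once among the entries; the Jacobi identity
`ad ⁅x, y⁆ = [ad x, ad y]` then splits that entry into `x, y` and `y, x`.
-/

section LieRing

variable {L : Type*} [LieRing L]

@[simp]
theorem leftNormedBracket_cons (x a : L) (l : List L) :
    leftNormedBracket x (a :: l) = leftNormedBracket ⁅x, a⁆ l := rfl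

theorem leftNormedBracket_append (x : L) (l₁ l₂ : List L) :
    leftNormedBracket x (l₁ ++ l₂) = leftNormedBracket (leftNormedBracket x l₁) l₂ :=
  List.foldl_append

theorem leftNormedBracket_neg (x : L) (l : List L) :
    leftNormedBracket (-x) l = -leftNormedBracket x l := by
  induction l generalizing x with
  | nil => rfl
  | cons a l ih => simp only [leftNormedBracket_cons, neg_lie, ih]

theorem leftNormedBracket_sub (x y : L) (l : List L) :
    leftNormedBracket (x - y) l = leftNormedBracket x l - leftNormedBracket y l := by
  induction l generalizing x y with
  | nil => rfl
  | cons a l ih => simp only [leftNormedBracket_cons, sub_lie, ih]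

-- The Jacobi identity `ad ⁅y, z⁆ = [ad y, ad z]`, with `ad` acting from the right.
theorem leftNormedBracket_lie_cons (x y z : L) (l : List L) :
    leftNormedBracket x (⁅y, z⁆ :: l) =
      leftNormedBracket x (y :: z :: l) - leftNormedBracket x (z :: y :: l) := by
  simp only [leftNormedBracket_cons, ← leftNormedBracket_sub]
  rw [lie_lie, ← lie_skew y ⁅x, z⁆]
  abel_nf

end LieRing

section Span

variable (R : Type*) {L : Type*} [Ring R] [LieRing L] [Module R L]

def leftNormedSpan (c : L) (s : List L) : Submodule R L :=
  Submodule.span R {y | ∃ l : List L, l.Perm s ∧ y = leftNormedBracket c l}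

variable {R}

theorem leftNormedBracket_mem_leftNormedSpan {c : L} {l s : List L} (h : l.Perm s) :
    leftNormedBracket c l ∈ leftNormedSpan R c s :=
  Submodule.subset_span ⟨l, h, rfl⟩

theorem leftNormedSpan_congr {c : L} {s s' : List L} (h : s.Perm s') :
    leftNormedSpan R c s = leftNormedSpan R c s' := by
  simp only [leftNormedSpan, h.congr_right]

theorem leftNormedSpan_lie_cons_le (c x y : L) (s : List L) :
    leftNormedSpan R c (⁅x, y⁆ :: s) ≤ leftNormedSpan R c (x :: y :: s) := by
  refine Submodule.span_le.mpr ?_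
  rintro _ ⟨l, hl, rfl⟩
  obtain ⟨l₁, l₂, rfl⟩ := List.append_of_mem (hl.mem_iff.mpr List.mem_cons_self)
  have hs : (l₁ ++ l₂).Perm s := (List.perm_middle.symm.trans hl).cons_inv
  rw [leftNormedBracket_append, leftNormedBracket_lie_cons, ← leftNormedBracket_append,
    ← leftNormedBracket_append]
  refine sub_mem (leftNormedBracket_mem_leftNormedSpan ?_)
    (leftNormedBracket_mem_leftNormedSpan ?_)
  · exact List.perm_middle.trans ((List.perm_middle.trans (hs.cons y)).cons x)
  · exact (List.perm_middle.trans ((List.perm_middle.trans (hs.cons x)).cons y)).trans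
      (List.Perm.swap x y s)

theorem leftNormedBracket_append_cons_mem_leftNormedSpan (x c : L) (l₁ l₂ : List L) :
    leftNormedBracket x (l₁ ++ c :: l₂) ∈ leftNormedSpan R c (x :: (l₁ ++ l₂)) := by
  induction l₁ generalizing x with
  | nil =>
    rw [List.nil_append, List.nil_append, leftNormedBracket_cons, ← lie_skew,
      leftNormedBracket_neg]
    exact neg_mem (leftNormedBracket_mem_leftNormedSpan (List.Perm.refl _))
  | cons y l₁ ih =>
    exact leftNormedSpan_lie_cons_le c x y _ (ih ⁅x, y⁆)

theorem leftNormedBracket_mem_leftNormedSpan_of_perm_cons {x c : L} {l s : List L}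
    (h : (x :: l).Perm (c :: s)) : leftNormedBracket x l ∈ leftNormedSpan R c s := by
  by_cases hcx : c = x
  · subst hcx
    exact leftNormedBracket_mem_leftNormedSpan h.cons_inv
  · obtain ⟨l₁, l₂, rfl⟩ := List.append_of_mem
      ((List.mem_cons.mp (h.mem_iff.mpr List.mem_cons_self)).resolve_left hcx)
    rw [← leftNormedSpan_congr ((List.perm_middle (l₁ := x :: l₁)).symm.trans h).cons_inv]
    exact leftNormedBracket_append_cons_mem_leftNormedSpan x c l₁ l₂

theorem leftNormedSpan_map {ι : Type*} (b : ι → L) (c : L) (s : List ι) :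
    leftNormedSpan R c (s.map b) =
      Submodule.span R {y | ∃ l : List ι, l.Perm s ∧ y = leftNormedBracket c (l.map b)} := by
  refine congrArg _ (Set.ext fun y => ⟨?_, ?_⟩)
  · rintro ⟨l, hl, rfl⟩
    obtain ⟨t, rfl, ht⟩ : Relation.Comp (· = List.map b ·) List.Perm l s := by
      rwa [List.eq_map_comp_perm]
    exact ⟨t, ht, rfl⟩
  · rintro ⟨t, ht, rfl⟩
    exact ⟨t.map b, ht.map b, rfl⟩

end Span

theorem List.Nodup.perm_cons_filter_ne {α : Type*} [DecidableEq α] {l : List α} (hl : l.Nodup)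
    {a : α} (ha : a ∈ l) : l.Perm (a :: l.filter (fun x => x ≠ a)) := by
  simpa [hl.erase_eq_filter, bne, _root_.beq_eq_decide] using List.perm_cons_erase ha

/-- in a Lie algebra over a field of characteristic zero, the
left-normed bracket `[[b₁,b₂],…,bₘ]` is a linear combination of left-normed
brackets `[[b_k,b_{l₁}],…,b_{l_{m-1}}]`, where `(l₁,…,l_{m-1})` runs over
the permutations of `{1,…,m} \ {k}`. -/
theorem stmt0 {K L : Type*} [Field K] [LieRing L] [LieAlgebra K L]
    (m : ℕ) (hm : 1 ≤ m) (b : Fin m → L) (k : Fin m) :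
    leftNormedBracket (b ⟨0, hm⟩)
        (List.ofFn fun i : Fin (m - 1) => b ⟨i.1 + 1, by have := i.isLt; omega⟩) ∈
      Submodule.span K
        {y : L | ∃ l : List (Fin m),
          l.Perm ((List.finRange m).filter (fun i => i ≠ k)) ∧
          y = leftNormedBracket (b k) (l.map b)} := by
  obtain ⟨n, rfl⟩ : ∃ n, m = n + 1 := ⟨m - 1, by omega⟩
  have hb : b ⟨0, hm⟩ :: List.ofFn (fun i : Fin n => b i.succ) =
      (List.finRange (n + 1)).map b :=
    List.ofFn_succ.symm.trans List.ofFn_eq_map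
  rw [← leftNormedSpan_map]
  refine leftNormedBracket_mem_leftNormedSpan_of_perm_cons ((List.Perm.of_eq hb).trans ?_)
  exact ((List.nodup_finRange _).perm_cons_filter_ne (List.mem_finRange k)).map b
end

section
/- For the free associative algebra A = Aₙ over ℂ on n generators, the image Z of A·[[A,A],A]·A under the quotient map A → A/[A,A] is central in the graded Lie algebra B(A) = ⊕ B_i(A); that is, the bracket map B₁(A) × B_i(A) → B_{i+1}(A) vanishes on Z × B_i(A) for all i ≥ 1. -/
/-
Write `L₁ = A`, `L₂ = ⁅A, A⁆`, `L₃ = ⁅A, L₂⁆`. Modulo `L₂`, a generator `a ⁅ℓ, e⁆ f` of `M` (with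
`ℓ ∈ L₂`) is congruent to `⁅ℓ, e⁆ (f a)`, and hence to the product `ℓ ⁅e, f a⁆` of two elements
of `L₂`. Since `⁅L₂, A⁆ ⊆ L₃` and `⁅ℓ ℓ', x⁆ = ⁅ℓ, ℓ' x⁆ + ⁅ℓ', x ℓ⁆`, this gives `⁅M, A⁆ ⊆ L₃`.
The Jacobi identity `⁅z, ⁅a, u⁆⁆ = ⁅⁅z, a⁆, u⁆ + ⁅a, ⁅z, u⁆⁆` then propagates this along the lower
central series: an element `z` with `⁅z, A⁆ ⊆ L_{k+1}` satisfies `⁅z, Lᵢ⁆ ⊆ L_{i+k}`.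
-/

noncomputable section

/-- The free associative algebra on `n` generators over `ℂ`. -/
abbrev FreeA (n : ℕ) := FreeAlgebra ℂ (Fin n)

/-- The lower central series, with `lcs n 0 = L₁(A) = A`, `lcs n i = L_{i+1}(A)`. -/
def lcs (n : ℕ) : ℕ → Submodule ℂ (FreeA n)
  | 0 => ⊤
  | (i + 1) => Submodule.span ℂ {y : FreeA n | ∃ a : FreeA n, ∃ x ∈ lcs n i, y = a * x - x * a}

/-- The span of the elements `a·[[b,c],d]·e`, i.e. the ideal `A[[A,A],A]A`. -/
def Mspan (n : ℕ) : Submodule ℂ (FreeA n) :=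
  Submodule.span ℂ {y : FreeA n | ∃ a b c e f : FreeA n,
    y = a * ((b * c - c * b) * e - e * (b * c - c * b)) * f}

open LieModule

attribute [local instance] LieRing.ofAssociativeRing

section LieAlgebra

variable {R L : Type*} [CommRing R] [LieRing L] [LieAlgebra R L]

theorem lie_mem_lowerCentralSeries_succ_right {M : Type*} [AddCommGroup M] [Module R M]
    [LieRingModule L M] [LieModule R L M] (y : L) {k : ℕ} {m : M}
    (hm : m ∈ lowerCentralSeries R L M k) : ⁅y, m⁆ ∈ lowerCentralSeries R L M (k + 1) := by
  rw [lowerCentralSeries_succ]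
  exact LieSubmodule.lie_mem_lie (LieSubmodule.mem_top y) hm

theorem lie_mem_lowerCentralSeries_succ_left {k : ℕ} {m : L}
    (hm : m ∈ lowerCentralSeries R L L k) (y : L) : ⁅m, y⁆ ∈ lowerCentralSeries R L L (k + 1) := by
  rw [← lie_skew]
  exact neg_mem (lie_mem_lowerCentralSeries_succ_right y hm)

theorem lie_mem_lowerCentralSeries_one (y m : L) : ⁅y, m⁆ ∈ lowerCentralSeries R L L 1 :=
  lie_mem_lowerCentralSeries_succ_right y (by simp)

theorem lie_mem_lowerCentralSeries_add {k : ℕ} {z : L}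
    (hz : ∀ a : L, ⁅z, a⁆ ∈ lowerCentralSeries R L L k) {i : ℕ} {x : L}
    (hx : x ∈ lowerCentralSeries R L L i) : ⁅z, x⁆ ∈ lowerCentralSeries R L L (i + k) := by
  induction i generalizing k z x with
  | zero => simpa using hz x
  | succ i ih =>
    rw [lowerCentralSeries_succ, ← LieSubmodule.mem_toSubmodule,
      LieSubmodule.lieIdeal_oper_eq_linear_span'] at hx
    induction hx using Submodule.span_induction with
    | mem x hx =>
      obtain ⟨a, -, u, hu, rfl⟩ := hx
      have hza : ∀ b : L, ⁅⁅z, a⁆, b⁆ ∈ lowerCentralSeries R L L (k + 1) :=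
        lie_mem_lowerCentralSeries_succ_left (hz a)
      rw [leibniz_lie, show i + 1 + k = i + (k + 1) by omega]
      exact add_mem (ih hza hu) (lie_mem_lowerCentralSeries_succ_right a (ih hz hu))
    | zero => simp
    | add x y _ _ hx hy => simpa only [lie_add] using add_mem hx hy
    | smul c x _ hx => simpa only [lie_smul] using SMulMemClass.smul_mem c hx

end LieAlgebra

section AssociativeAlgebra

variable {R A : Type*} [CommRing R] [Ring A] [Algebra R A]

theorem lie_mul_lie_mul_mem_lowerCentralSeries_two {ℓ : A}
    (hℓ : ℓ ∈ lowerCentralSeries R A A 1) (a e f x : A) :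
    ⁅a * ⁅ℓ, e⁆ * f, x⁆ ∈ lowerCentralSeries R A A 2 := by
  have key : ⁅a * ⁅ℓ, e⁆ * f, x⁆ = ⁅⁅a, ⁅ℓ, e⁆ * f⁆, x⁆ - ⁅⁅e, ℓ * (f * a)⁆, x⁆
      - ⁅⁅e, f * a⁆ * x, ℓ⁆ - ⁅x * ℓ, ⁅e, f * a⁆⁆ := by
    simp only [Ring.lie_def]
    noncomm_ring
  rw [key]
  refine sub_mem (sub_mem (sub_mem ?_ ?_) ?_) ?_
  · exact lie_mem_lowerCentralSeries_succ_left (lie_mem_lowerCentralSeries_one _ _) x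
  · exact lie_mem_lowerCentralSeries_succ_left (lie_mem_lowerCentralSeries_one _ _) x
  · exact lie_mem_lowerCentralSeries_succ_right _ hℓ
  · exact lie_mem_lowerCentralSeries_succ_right _ (lie_mem_lowerCentralSeries_one _ _)

end AssociativeAlgebra

theorem lcs_eq_lowerCentralSeries (n i : ℕ) :
    lcs n i = (lowerCentralSeries ℂ (FreeA n) (FreeA n) i).toSubmodule := by
  induction i with
  | zero => simp [lcs]
  | succ i ih =>
    rw [lcs, lowerCentralSeries_succ, LieSubmodule.lieIdeal_oper_eq_linear_span', ih]
    simp [Ring.lie_def, eq_comm]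

theorem lie_mem_lowerCentralSeries_two_of_mem_Mspan {n : ℕ} {z : FreeA n} (hz : z ∈ Mspan n)
    (x : FreeA n) :
    ⁅z, x⁆ ∈ lowerCentralSeries ℂ (FreeA n) (FreeA n) 2 := by
  induction hz using Submodule.span_induction with
  | mem z hz =>
    obtain ⟨a, b, c, e, f, rfl⟩ := hz
    simp only [← Ring.lie_def]
    exact lie_mul_lie_mul_mem_lowerCentralSeries_two
      (lie_mem_lowerCentralSeries_one b c) a e f x
  | zero => simp
  | add z w _ _ hz hw => simpa only [add_lie] using add_mem hz hw
  | smul c z _ hz => simpa only [smul_lie] using SMulMemClass.smul_mem c hz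

/-- the image `Z` of `A[[A,A],A]A` in `B₁(A) = A/[A,A]` is central in the
associated graded Lie algebra `B(A)`: the bracket `B₁(A) × B_i(A) → B_{i+1}(A)` vanishes on
`Z × B_i(A)`.  Concretely: for any representative `z ∈ A[[A,A],A]A` and any
`x ∈ L_{i+1}(A) = lcs n i`, the commutator `[z,x]` lies in `L_{i+3}(A) = lcs n (i+2)`. -/
theorem stmt16 (n : ℕ) (z : FreeA n) (hz : z ∈ Mspan n)
    (i : ℕ) (x : FreeA n) (hx : x ∈ lcs n i) :
    z * x - x * z ∈ lcs n (i + 2) := by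
  rw [lcs_eq_lowerCentralSeries] at hx ⊢
  rw [← Ring.lie_def]
  exact lie_mem_lowerCentralSeries_add (lie_mem_lowerCentralSeries_two_of_mem_Mspan hz) hx
end
end
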